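/- arXiv:1406.1300 — 3 statements merged into one kernel-verified Lean document; each statement's English description precedes it below -/
import Mathlib

section
/- Let G be a simple graph on a finite vertex set V with |V| = n ≥ 2 and let σ be an orientation of G. Let p = |det R_s(G^σ)|. Then RE_s(G^σ) ≥ √(4·R_{−1}(G) + n·(n−2)·p^{2/n}). -/
open Matrix Polynomial

/-- `σ` is an orientation of the simple graph `G`. -/
def IsOrientation {V : Type*} [Fintype V] (G : SimpleGraph V) [DecidableRel G.Adj]
    (σ : V → V → ℝ) : Prop :=
  (∀ v w, σ v w + σ w v = 0) ∧
  (∀ v w, G.Adj v w → σ v w = 1 ∨ σ v w = -1) ∧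
  (∀ v w, ¬ G.Adj v w → σ v w = 0)

/-- The skew Randić matrix of the oriented graph `G^σ`. -/
noncomputable def skewRandicMatrix {V : Type*} [Fintype V] (G : SimpleGraph V)
    [DecidableRel G.Adj] (σ : V → V → ℝ) : Matrix V V ℝ :=
  fun v w => σ v w / Real.sqrt ((G.degree v : ℝ) * (G.degree w : ℝ))

/-- The Randić matrix of `G`. -/
noncomputable def randicMatrix {V : Type*} [Fintype V] (G : SimpleGraph V)
    [DecidableRel G.Adj] : Matrix V V ℝ :=
  fun v w => if G.Adj v w then 1 / Real.sqrt ((G.degree v : ℝ) * (G.degree w : ℝ)) else 0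

/-- The spectrum of a real matrix: the multiset of roots, with multiplicity, of its
characteristic polynomial regarded as a matrix over `ℂ`. -/
noncomputable def spec {V : Type*} [Fintype V] [DecidableEq V] (M : Matrix V V ℝ) :
    Multiset ℂ :=
  (M.map (fun x : ℝ => (x : ℂ))).charpoly.roots

/-- The energy of a real matrix: the sum of the absolute values of its spectrum. -/
noncomputable def energy {V : Type*} [Fintype V] [DecidableEq V] (M : Matrix V V ℝ) : ℝ :=
  ((spec M).map (fun z => ‖z‖)).sum

/-- The general Randić index `R_{-1}(G)`: the sum over all edges `{v,w}` of
`1/(d(v)·d(w))`. -/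
noncomputable def randicIndexNegOne {V : Type*} [Fintype V] [DecidableEq V]
    (G : SimpleGraph V) [DecidableRel G.Adj] : ℝ :=
  ∑ e ∈ G.edgeFinset,
    Sym2.lift ⟨fun v w => 1 / ((G.degree v : ℝ) * (G.degree w : ℝ)),
      fun v w => by simp [mul_comm]⟩ e

/-! The matrix `-i R_s` is Hermitian, so `R_s` has eigenvalues `i ε_j` with `ε_j` real; as `R_s`
is real and skew-symmetric, the multiset of the `ε_j` is invariant under negation, so some
permutation `π` satisfies `ε ∘ π = -ε` and fixes only indices with `ε_j = 0`. In the expansion of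
`RE_s² = (∑ |ε_j|)²` the terms `|ε_j|²` and `|ε_j| |ε_{π j}|` add up to
`2 ∑ ε_j² = 2 ∑ R_s(v,w)² = 4 R₋₁`. If `p ≠ 0`, then `π` has no fixed points, and AM-GM on the
remaining `n (n - 2)` products, whose product is `p ^ (2 (n - 2))`, bounds them below by
`n (n - 2) p ^ (2/n)`. -/

open Finset Complex

theorem Equiv.Perm.exists_apply_eq_of_map_univ_eq {ι α : Type*} [Fintype ι] [DecidableEq α]
    {f g : ι → α} (h : univ.val.map f = univ.val.map g) :
    ∃ π : Equiv.Perm ι, ∀ i, f (π i) = g i := by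
  have hcard (c : α) : Fintype.card {i // g i = c} = Fintype.card {i // f i = c} := by
    simpa [Fintype.card_subtype, Multiset.count_map, eq_comm, Finset.card_def] using
      congrArg (Multiset.count c) h.symm
  exact ⟨Equiv.ofFiberEquiv fun c => Fintype.equivOfCardEq (hcard c),
    Equiv.ofFiberEquiv_map _⟩

section PairedAMGM

variable {ι : Type*} [Fintype ι] [DecidableEq ι]

def nonPartnerPairs (π : Equiv.Perm ι) : Finset (Σ _ : ι, ι) :=
  univ.sigma fun i => (univ.erase i).erase (π i)

variable {a : ι → ℝ} {π : Equiv.Perm ι}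

lemma card_nonPartnerPairs (hπ : ∀ i, π i ≠ i) :
    #(nonPartnerPairs π) = Fintype.card ι * (Fintype.card ι - 2) := by
  simp [nonPartnerPairs, card_erase_of_mem, hπ, Nat.sub_sub]

lemma sum_mul_eq_two_mul_sq_add_sum_erase (ha : ∀ i, a (π i) = a i)
    (hfix : ∀ i, π i = i → a i = 0) (i : ι) :
    ∑ j, a i * a j = 2 * a i ^ 2 + ∑ j ∈ (univ.erase i).erase (π i), a i * a j := by
  by_cases h : π i = i
  · simp [hfix i h]
  · rw [← add_sum_erase _ _ (mem_univ i), ← add_sum_erase _ _ (mem_erase.2 ⟨h, mem_univ _⟩), ha]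
    ring

lemma sq_sum_eq_two_mul_sum_sq_add_sum_nonPartnerPairs (ha : ∀ i, a (π i) = a i)
    (hfix : ∀ i, π i = i → a i = 0) :
    (∑ i, a i) ^ 2 = 2 * ∑ i, a i ^ 2 + ∑ p ∈ nonPartnerPairs π, a p.1 * a p.2 := by
  rw [sq, sum_mul_sum, nonPartnerPairs, sum_sigma, mul_sum, ← sum_add_distrib]
  exact sum_congr rfl fun i _ => sum_mul_eq_two_mul_sq_add_sum_erase ha hfix i

lemma prod_nonPartnerPairs (ha : ∀ i, a (π i) = a i) (hq : ∏ i, a i ≠ 0)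
    (hπ : ∀ i, π i ≠ i) (hcard : 2 ≤ Fintype.card ι) :
    ∏ p ∈ nonPartnerPairs π, a p.1 * a p.2 = (∏ i, a i) ^ (2 * (Fintype.card ι - 2)) := by
  have hrow (i : ι) : (∏ j ∈ (univ.erase i).erase (π i), a i * a j) * a i ^ 4
      = a i ^ Fintype.card ι * ∏ j, a j := by
    calc _ = (a i * a i) * ((a i * a (π i)) * ∏ j ∈ (univ.erase i).erase (π i), a i * a j) := by
          rw [ha]; ring
      _ = ∏ j, a i * a j := by
          rw [mul_prod_erase _ (fun j => a i * a j) (mem_erase.2 ⟨hπ i, mem_univ _⟩),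
            mul_prod_erase _ (fun j => a i * a j) (mem_univ i)]
      _ = _ := by rw [prod_mul_distrib, prod_const, card_univ]
  have htotal : (∏ p ∈ nonPartnerPairs π, a p.1 * a p.2) * (∏ i, a i) ^ 4
      = (∏ i, a i) ^ (2 * Fintype.card ι) := by
    rw [nonPartnerPairs, prod_sigma, ← prod_pow, ← prod_mul_distrib,
      prod_congr rfl fun i _ => hrow i, prod_mul_distrib, prod_const, card_univ, prod_pow]
    ring
  refine mul_right_cancel₀ (pow_ne_zero 4 hq) ?_
  rw [htotal, ← pow_add]
  congr 1
  omega

lemma card_mul_rpow_le_sum_nonPartnerPairs_of_pos (ha : ∀ i, a (π i) = a i)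
    (hpos : ∀ i, 0 < a i) (hπ : ∀ i, π i ≠ i) :
    (Fintype.card ι : ℝ) * ((Fintype.card ι : ℝ) - 2) * (∏ i, a i) ^ ((2 : ℝ) / Fintype.card ι)
      ≤ ∑ p ∈ nonPartnerPairs π, a p.1 * a p.2 := by
  set N := Fintype.card ι
  set q := ∏ i, a i
  have hq : 0 < q := prod_pos fun i _ => hpos i
  rcases le_or_gt ((N : ℝ) * ((N : ℝ) - 2)) 0 with hN | hN
  · exact (mul_nonpos_of_nonpos_of_nonneg hN (by positivity)).trans
      (sum_nonneg fun p _ => (mul_pos (hpos _) (hpos _)).le)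
  have hN3 : 3 ≤ N := by
    by_contra h
    interval_cases N <;> norm_num at hN
  have hcard : (#(nonPartnerPairs π) : ℝ) = N * (N - 2) := by
    rw [card_nonPartnerPairs hπ, Nat.cast_mul, Nat.cast_sub (by omega)]
    norm_num [N]
  have hexp : (q ^ (2 * (N - 2)) : ℝ) ^ ((N : ℝ) * (N - 2))⁻¹ = q ^ ((2 : ℝ) / N) := by
    rw [← Real.rpow_natCast, ← Real.rpow_mul hq.le, Nat.cast_mul, Nat.cast_sub (by omega)]
    have : (N : ℝ) - 2 ≠ 0 := right_ne_zero_of_mul hN.ne'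
    congr 1
    field_simp
    norm_num
  have amgm := Real.geom_mean_le_arith_mean (nonPartnerPairs π) (fun _ => 1)
    (fun p => a p.1 * a p.2) (by simp) (by simpa [hcard] using hN)
    (fun p _ => (mul_pos (hpos _) (hpos _)).le)
  simp only [Real.rpow_one, one_mul, sum_const, nsmul_eq_mul, mul_one] at amgm
  rwa [hcard, prod_nonPartnerPairs ha hq.ne' hπ (by omega), hexp, le_div_iff₀ hN, mul_comm] at amgm

lemma card_mul_rpow_le_sum_nonPartnerPairs (ha₀ : ∀ i, 0 ≤ a i) (ha : ∀ i, a (π i) = a i)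
    (hfix : ∀ i, π i = i → a i = 0) :
    (Fintype.card ι : ℝ) * ((Fintype.card ι : ℝ) - 2) * (∏ i, a i) ^ ((2 : ℝ) / Fintype.card ι)
      ≤ ∑ p ∈ nonPartnerPairs π, a p.1 * a p.2 := by
  by_cases hq : ∏ i, a i = 0
  · obtain ⟨i, -, hi⟩ := prod_eq_zero_iff.1 hq
    have hN : (Fintype.card ι : ℝ) ≠ 0 := Nat.cast_ne_zero.2 (Fintype.card_pos_iff.2 ⟨i⟩).ne'
    rw [hq, Real.zero_rpow (div_ne_zero two_ne_zero hN), mul_zero]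
    exact sum_nonneg fun p _ => mul_nonneg (ha₀ _) (ha₀ _)
  have hpos (i : ι) : 0 < a i := (ha₀ i).lt_of_ne fun h => hq (prod_eq_zero (mem_univ i) h.symm)
  exact card_mul_rpow_le_sum_nonPartnerPairs_of_pos ha hpos fun i h => (hpos i).ne' (hfix i h)

theorem two_mul_sum_sq_add_card_mul_rpow_le_sq_sum (ha₀ : ∀ i, 0 ≤ a i)
    (ha : ∀ i, a (π i) = a i) (hfix : ∀ i, π i = i → a i = 0) :
    2 * ∑ i, a i ^ 2 + (Fintype.card ι : ℝ) * ((Fintype.card ι : ℝ) - 2) *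
        (∏ i, a i) ^ ((2 : ℝ) / Fintype.card ι) ≤ (∑ i, a i) ^ 2 := by
  rw [sq_sum_eq_two_mul_sum_sq_add_sum_nonPartnerPairs ha hfix]
  linarith [card_mul_rpow_le_sum_nonPartnerPairs ha₀ ha hfix]

end PairedAMGM

section UnitaryConj

variable {n : Type*} [Fintype n] [DecidableEq n]

lemma Matrix.roots_charpoly_diagonal {R : Type*} [CommRing R] [IsDomain R] (d : n → R) :
    (diagonal d).charpoly.roots = univ.val.map d := by
  rw [charpoly_diagonal, roots_prod]
  · simp
  · simp [prod_ne_zero_iff, X_sub_C_ne_zero]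

variable {R : Type*} [CommRing R] [StarRing R] {U : Matrix n n R}

lemma Matrix.charpoly_unitary_conj (hU : U ∈ unitaryGroup n R) (A : Matrix n n R) :
    (U * A * star U).charpoly = A.charpoly := by
  rw [charpoly_mul_comm, ← mul_assoc, Unitary.star_mul_self_of_mem hU, one_mul]

lemma Matrix.unitary_conj_mul_unitary_conj (hU : U ∈ unitaryGroup n R) (A B : Matrix n n R) :
    U * A * star U * (U * B * star U) = U * (A * B) * star U := by
  calc U * A * star U * (U * B * star U) = U * A * (star U * U) * B * star U := by
        simp only [mul_assoc]
    _ = U * (A * B) * star U := by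
        rw [Unitary.star_mul_self_of_mem hU, mul_one, mul_assoc U A B]

lemma Matrix.trace_unitary_conj (hU : U ∈ unitaryGroup n R) (A : Matrix n n R) :
    (U * A * star U).trace = A.trace := by
  rw [trace_mul_comm, ← mul_assoc, Unitary.star_mul_self_of_mem hU, one_mul]

end UnitaryConj

section SkewSymmetric

variable {n : Type*} [Fintype n] [DecidableEq n] {M : Matrix n n ℝ}

theorem Matrix.exists_unitary_conj_diagonal_of_transpose_eq_neg (hM : Mᵀ = -M) :
    ∃ U ∈ unitaryGroup n ℂ, ∃ ε : n → ℝ,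
      M.map (↑) = U * diagonal (fun i => I * ε i) * star U := by
  have hH : ((-I) • M.map ((↑) : ℝ → ℂ)).IsHermitian := by
    have hM' (i j : n) : M j i = -M i j := by simpa using congrFun (congrFun hM i) j
    ext i j
    simp only [conjTranspose_apply, smul_apply, map_apply, smul_eq_mul, star_mul', star_neg,
      Complex.star_def, Complex.conj_I, Complex.conj_ofReal, hM' i j]
    push_cast
    ring
  refine ⟨_, hH.eigenvectorUnitary.2, hH.eigenvalues, ?_⟩
  calc M.map (↑) = I • ((-I) • M.map ((↑) : ℝ → ℂ)) := by simp [smul_smul]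
    _ = I • ((hH.eigenvectorUnitary : Matrix n n ℂ) * diagonal (RCLike.ofReal ∘ hH.eigenvalues) *
          star (hH.eigenvectorUnitary : Matrix n n ℂ)) := by
        exact congrArg (I • ·) (hH.spectral_theorem.trans (Unitary.conjStarAlgAut_apply _ _))
    _ = _ := by
      rw [← smul_mul_assoc, ← mul_smul_comm, ← diagonal_smul]
      rfl

variable {U : Matrix n n ℂ} {ε : n → ℝ}

lemma spec_eq_of_unitary_conj_diagonal (hU : U ∈ unitaryGroup n ℂ)
    (hdiag : M.map (↑) = U * diagonal (fun i => I * ε i) * star U) :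
    spec M = univ.val.map fun i => I * ε i := by
  rw [spec, hdiag, charpoly_unitary_conj hU, roots_charpoly_diagonal]

lemma map_univ_eq_map_neg_of_unitary_conj_diagonal (hM : Mᵀ = -M) (hU : U ∈ unitaryGroup n ℂ)
    (hdiag : M.map (↑) = U * diagonal (fun i => I * ε i) * star U) :
    univ.val.map ε = univ.val.map fun i => -ε i := by
  have hneg : -M.map ((↑) : ℝ → ℂ) = U * diagonal (fun i => I * ((-ε i : ℝ) : ℂ)) * star U := by
    rw [hdiag, ← neg_mul, ← mul_neg, diagonal_neg]
    simp
  have hcharpoly : (M.map ((↑) : ℝ → ℂ)).charpoly = (-M.map ((↑) : ℝ → ℂ)).charpoly := by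
    rw [← charpoly_transpose, ← transpose_map, hM, Matrix.map_neg _ Complex.ofReal_neg]
  have hroots := congrArg Polynomial.roots hcharpoly
  rw [hneg, hdiag, charpoly_unitary_conj hU, charpoly_unitary_conj hU, roots_charpoly_diagonal,
    roots_charpoly_diagonal] at hroots
  refine Multiset.map_injective (f := fun x : ℝ => I * (x : ℂ)) ?_ ?_
  · intro x y h
    simpa using h
  · simpa only [Multiset.map_map, Function.comp_def] using hroots

lemma sum_sq_eq_of_unitary_conj_diagonal (hM : Mᵀ = -M) (hU : U ∈ unitaryGroup n ℂ)
    (hdiag : M.map (↑) = U * diagonal (fun i => I * ε i) * star U) :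
    ∑ i, ε i ^ 2 = ∑ v, ∑ w, M v w ^ 2 := by
  have hM' (i j : n) : M j i = -M i j := by simpa using congrFun (congrFun hM i) j
  have htrace : (M.map ((↑) : ℝ → ℂ) * M.map ((↑) : ℝ → ℂ)).trace
      = -∑ v, ∑ w, ((M v w ^ 2 : ℝ) : ℂ) := by
    simp only [trace, Matrix.diag, mul_apply, map_apply, ← sum_neg_distrib]
    refine sum_congr rfl fun v _ => sum_congr rfl fun w _ => ?_
    rw [hM' v w]
    push_cast
    ring
  rw [hdiag, unitary_conj_mul_unitary_conj hU, trace_unitary_conj hU, diagonal_mul_diagonal,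
    trace_diagonal] at htrace
  have : ∑ i, ((ε i ^ 2 : ℝ) : ℂ) = ∑ v, ∑ w, ((M v w ^ 2 : ℝ) : ℂ) := by
    rw [← neg_inj, ← htrace, ← sum_neg_distrib]
    refine sum_congr rfl fun i _ => ?_
    rw [mul_mul_mul_comm, I_mul_I]
    push_cast
    ring
  exact_mod_cast this

lemma abs_det_eq_of_spec_eq (hspec : spec M = univ.val.map fun i => I * ε i) :
    |M.det| = ∏ i, |ε i| := by
  have hdet : (M.det : ℂ) = ∏ i, I * ε i := by
    rw [show (M.det : ℂ) = (M.map (↑)).det from Complex.ofRealHom.map_det M,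
      det_eq_prod_roots_charpoly]
    exact congrArg Multiset.prod hspec
  rw [← Real.norm_eq_abs, ← Complex.norm_real, hdet, norm_prod]
  simp

lemma energy_eq_of_spec_eq (hspec : spec M = univ.val.map fun i => I * ε i) :
    energy M = ∑ i, |ε i| := by
  rw [energy, hspec, Multiset.map_map, sum_eq_multiset_sum]
  simp

end SkewSymmetric

theorem SimpleGraph.sum_adj_eq_two_smul_sum_edgeFinset {V M : Type*} [Fintype V] [DecidableEq V]
    (G : SimpleGraph V) [DecidableRel G.Adj] [AddCommMonoid M] (f : V → V → M)
    (hf : ∀ v w, f v w = f w v) :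
    ∑ v, ∑ w, (if G.Adj v w then f v w else 0) = 2 • ∑ e ∈ G.edgeFinset, Sym2.lift ⟨f, hf⟩ e := by
  have hmaps : ∀ p ∈ {p ∈ (univ ×ˢ univ : Finset (V × V)) | G.Adj p.1 p.2},
      s(p.1, p.2) ∈ G.edgeFinset :=
    fun p hp => G.mem_edgeFinset.2 (mem_filter.1 hp).2
  rw [← sum_product', ← sum_filter, ← sum_fiberwise_of_maps_to hmaps, smul_sum]
  refine sum_congr rfl fun e he => ?_
  induction e using Sym2.ind with
  | _ v w =>
    have hvw : G.Adj v w := G.mem_edgeFinset.1 he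
    have hfiber : {p ∈ {p ∈ (univ ×ˢ univ : Finset (V × V)) | G.Adj p.1 p.2} |
        s(p.1, p.2) = s(v, w)} = {(v, w), (w, v)} := by
      ext ⟨x, y⟩
      simp only [mem_filter, mem_product, mem_univ, true_and, Sym2.eq_iff, mem_insert,
        mem_singleton, Prod.mk.injEq]
      constructor
      · exact fun h => h.2
      · rintro (⟨rfl, rfl⟩ | ⟨rfl, rfl⟩)
        exacts [⟨hvw, Or.inl ⟨rfl, rfl⟩⟩, ⟨hvw.symm, Or.inr ⟨rfl, rfl⟩⟩]
    rw [hfiber, sum_pair (by simp [G.ne_of_adj hvw]), Sym2.lift_mk, two_smul, hf w v]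

namespace IsOrientation

variable {V : Type*} [Fintype V] {G : SimpleGraph V} [DecidableRel G.Adj] {σ : V → V → ℝ}

lemma skewRandicMatrix_transpose (hσ : IsOrientation G σ) :
    (skewRandicMatrix G σ)ᵀ = -skewRandicMatrix G σ := by
  ext v w
  rw [transpose_apply, neg_apply, skewRandicMatrix, skewRandicMatrix, mul_comm,
    eq_neg_of_add_eq_zero_left (hσ.1 w v), neg_div]

lemma skewRandicMatrix_apply_sq (hσ : IsOrientation G σ) (v w : V) :
    skewRandicMatrix G σ v w ^ 2
      = if G.Adj v w then 1 / ((G.degree v : ℝ) * (G.degree w : ℝ)) else 0 := by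
  split_ifs with h
  · have hσ_sq : σ v w ^ 2 = 1 := by rcases hσ.2.1 v w h with h1 | h1 <;> simp [h1]
    rw [skewRandicMatrix, div_pow, hσ_sq, Real.sq_sqrt (by positivity)]
  · simp [skewRandicMatrix, hσ.2.2 v w h]

lemma sum_skewRandicMatrix_sq [DecidableEq V] (hσ : IsOrientation G σ) :
    ∑ v, ∑ w, skewRandicMatrix G σ v w ^ 2 = 2 * randicIndexNegOne G := by
  simp_rw [hσ.skewRandicMatrix_apply_sq]
  rw [SimpleGraph.sum_adj_eq_two_smul_sum_edgeFinset, nsmul_eq_mul, randicIndexNegOne]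
  · norm_num
  · intro v w
    rw [mul_comm]

end IsOrientation

theorem skewRandic_energy_lower_bound_general
    {V : Type*} [Fintype V] [DecidableEq V] (G : SimpleGraph V) [DecidableRel G.Adj]
    (σ : V → V → ℝ) (hσ : IsOrientation G σ) :
    Real.sqrt (4 * randicIndexNegOne G +
        (Fintype.card V : ℝ) * ((Fintype.card V : ℝ) - 2) *
          |(skewRandicMatrix G σ).det| ^ ((2 : ℝ) / (Fintype.card V : ℝ)))
      ≤ energy (skewRandicMatrix G σ) := by
  have hskew := hσ.skewRandicMatrix_transpose
  obtain ⟨U, hU, ε, hdiag⟩ := exists_unitary_conj_diagonal_of_transpose_eq_neg hskew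
  have hspec := spec_eq_of_unitary_conj_diagonal hU hdiag
  obtain ⟨π, hπ⟩ := Equiv.Perm.exists_apply_eq_of_map_univ_eq
    (map_univ_eq_map_neg_of_unitary_conj_diagonal hskew hU hdiag)
  have hpaired := two_mul_sum_sq_add_card_mul_rpow_le_sq_sum (a := fun i => |ε i|) (π := π)
    (fun i => abs_nonneg _) (fun i => by simp [hπ])
    (fun i hi => abs_eq_zero.2 (by linarith [hi ▸ hπ i]))
  have hrandic : 4 * randicIndexNegOne G = 2 * ∑ i, |ε i| ^ 2 := by
    simp_rw [sq_abs]
    rw [sum_sq_eq_of_unitary_conj_diagonal hskew hU hdiag, hσ.sum_skewRandicMatrix_sq]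
    ring
  rw [energy_eq_of_spec_eq hspec, Real.sqrt_le_left (sum_nonneg fun i _ => abs_nonneg _),
    abs_det_eq_of_spec_eq hspec, hrandic]
  exact hpaired

theorem skewRandic_energy_lower_bound
    {V : Type*} [Fintype V] [DecidableEq V] (G : SimpleGraph V) [DecidableRel G.Adj]
    (σ : V → V → ℝ) (hσ : IsOrientation G σ) (hn : 2 ≤ Fintype.card V) :
    Real.sqrt (4 * randicIndexNegOne G +
        (Fintype.card V : ℝ) * ((Fintype.card V : ℝ) - 2) *
          |(skewRandicMatrix G σ).det| ^ ((2 : ℝ) / (Fintype.card V : ℝ)))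
      ≤ energy (skewRandicMatrix G σ) :=
  skewRandic_energy_lower_bound_general G σ hσ
end

section
/- Let T be a tree (a connected acyclic simple graph) on a finite vertex set V with |V| = n ≥ 2, and let σ be any orientation of T. Then RE_s(T^σ) ≥ 2. -/
open Matrix Polynomial

/-!
The skew Randić matrix `M` is real and skew-symmetric, so its eigenvalues `λᵢ` satisfy
`∑ λᵢ = tr M = 0` and `∑ λᵢ² = tr M² = -∑ᵢⱼ Mᵢⱼ² = -2 R₋₁`. Squaring `∑ λᵢ = 0` gives
`2 e₂(λ) = 2 R₋₁`, hence `RE_s² = ∑ |λᵢ|² + 2 e₂(|λ|) ≥ |∑ λᵢ²| + 2 |e₂(λ)| = 4 R₋₁`.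
For a tree, `1/(d_v d_w) ≥ 1/d_v + 1/d_w - 1` summed over the `n - 1` edges gives
`R₋₁ ≥ n - (n - 1) = 1`.
-/

namespace Multiset

theorem esymm_two_cons {R : Type*} [CommRing R] (a : R) (s : Multiset R) :
    (a ::ₘ s).esymm 2 = a * s.sum + s.esymm 2 := by
  rw [esymm, show (2 : ℕ) = 1 + 1 from rfl, powersetCard_cons, map_add, sum_add, map_map,
    powersetCard_one, map_map, add_comm]
  simpa [Function.comp_def, esymm] using sum_map_mul_left (f := id) (a := a) (s := s)

theorem sq_sum_eq_sum_map_sq_add_two_mul_esymm_two {R : Type*} [CommRing R] (s : Multiset R) :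
    s.sum ^ 2 = (s.map (· ^ 2)).sum + 2 * s.esymm 2 := by
  induction s using Multiset.induction_on with
  | empty => simp [esymm, powersetCard_zero_right]
  | cons a s ih =>
    simp only [sum_cons, map_cons, esymm_two_cons]
    linear_combination ih

theorem norm_esymm_le {𝕜 : Type*} [NormedField 𝕜] (s : Multiset 𝕜) (k : ℕ) :
    ‖s.esymm k‖ ≤ (s.map (‖·‖)).esymm k := by
  rw [esymm, esymm, powersetCard_map, map_map]
  refine (norm_multiset_sum_le _).trans ?_
  rw [map_map]
  exact sum_map_le_sum_map _ _ fun t _ => (map_multiset_prod (normHom : 𝕜 →*₀ ℝ) t).le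

theorem two_mul_norm_sum_map_sq_le {𝕜 : Type*} [NormedField 𝕜] (s : Multiset 𝕜)
    (hs : s.sum = 0) : 2 * ‖(s.map (· ^ 2)).sum‖ ≤ (s.map (‖·‖)).sum ^ 2 := by
  have hsq := sq_sum_eq_sum_map_sq_add_two_mul_esymm_two s
  have h₁ : ‖(s.map (· ^ 2)).sum‖ ≤ ((s.map (‖·‖)).map (· ^ 2)).sum := by
    refine (norm_multiset_sum_le _).trans_eq ?_
    simp [map_map]
  have h₂ : ‖(s.map (· ^ 2)).sum‖ ≤ 2 * ‖s.esymm 2‖ := by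
    rw [hs, eq_comm, zero_pow two_ne_zero, add_eq_zero_iff_eq_neg] at hsq
    rw [hsq, norm_neg, two_mul, two_mul]
    exact norm_add_le _ _
  have h₃ := norm_esymm_le s 2
  rw [sq_sum_eq_sum_map_sq_add_two_mul_esymm_two]
  linarith

end Multiset

theorem Finset.sum_powersetCard_two_sum_offDiag {α M : Type*} [DecidableEq α] [AddCommMonoid M]
    (t : Finset α) (f : α × α → M) :
    ∑ s ∈ t.powersetCard 2, ∑ p ∈ s.offDiag, f p = ∑ p ∈ t.offDiag, f p := by
  rw [Finset.sum_comm' (t' := t.offDiag) (s' := fun p : α × α => {{p.1, p.2}})]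
  · simp
  rintro s ⟨a, b⟩
  simp only [mem_powersetCard, mem_offDiag, mem_singleton]
  constructor
  · rintro ⟨⟨hst, hs⟩, ha, hb, hab⟩
    refine ⟨(eq_of_subset_of_card_le ?_ ?_).symm, hst ha, hst hb, hab⟩
    · simp [insert_subset_iff, ha, hb]
    · rw [hs, card_pair hab]
  · rintro ⟨rfl, ha, hb, hab⟩
    simp [insert_subset_iff, ha, hb, hab, card_pair hab]

theorem Finset.sq_sum_diag_sub_sum_sum_mul_eq_sum_offDiag {α R : Type*} [DecidableEq α]
    [CommRing R] (t : Finset α) (f : α → α → R) :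
    (∑ i ∈ t, f i i) ^ 2 - ∑ i ∈ t, ∑ j ∈ t, f i j * f j i =
      ∑ p ∈ t.offDiag, (f p.1 p.1 * f p.2 p.2 - f p.1 p.2 * f p.2 p.1) := by
  rw [sq, sum_mul_sum]
  simp_rw [← sum_sub_distrib]
  rw [← sum_product' (f := fun i j => f i i * f j j - f i j * f j i),
    ← diag_union_offDiag, sum_union (disjoint_diag_offDiag t), add_eq_right]
  exact sum_eq_zero fun p hp => by simp [(mem_diag.mp hp).2]

theorem Matrix.two_mul_det_of_card_eq_two {m R : Type*} [Fintype m] [DecidableEq m] [CommRing R]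
    (hm : Fintype.card m = 2) (B : Matrix m m R) :
    2 * B.det = B.trace ^ 2 - (B ^ 2).trace := by
  nontriviality R
  have hcayley := congrArg trace B.aeval_self_charpoly
  rw [B.charpoly_of_card_eq_two hm] at hcayley
  simp [Algebra.algebraMap_eq_smul_one, trace_sub, trace_add, trace_smul, hm] at hcayley
  linear_combination hcayley

theorem Matrix.two_mul_charpoly_coeff_card_sub_two {n R : Type*} [Fintype n] [DecidableEq n]
    [CommRing R] (A : Matrix n n R) (hn : 2 ≤ Fintype.card n) :
    2 * A.charpoly.coeff (Fintype.card n - 2) = A.trace ^ 2 - (A ^ 2).trace := by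
  have hminor (s : Finset n) (hs : s ∈ Finset.univ.powersetCard 2) :
      2 * (A.submatrix (Subtype.val : s → n) Subtype.val).det =
        ∑ p ∈ s.offDiag, (A p.1 p.1 * A p.2 p.2 - A p.1 p.2 * A p.2 p.1) := by
    rw [two_mul_det_of_card_eq_two (by simpa using (Finset.mem_powersetCard.mp hs).2),
      ← Finset.sq_sum_diag_sub_sum_sum_mul_eq_sum_offDiag s A]
    simp only [← Finset.sum_coe_sort s]
    simp [trace, sq, mul_apply]
  rw [charpoly_coeff_eq_sum_minors A 2 hn, neg_one_sq, one_mul, Finset.mul_sum,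
    Finset.sum_congr rfl hminor, Finset.sum_powersetCard_two_sum_offDiag,
    ← Finset.sq_sum_diag_sub_sum_sum_mul_eq_sum_offDiag _ A]
  simp [trace, sq, mul_apply]

theorem Matrix.trace_sq_eq_sum_sq_roots_charpoly {n K : Type*} [Fintype n] [DecidableEq n]
    [Field K] [IsAlgClosed K] (A : Matrix n n K) (hn : 2 ≤ Fintype.card n) :
    (A ^ 2).trace = (A.charpoly.roots.map (· ^ 2)).sum := by
  have hesymm : A.charpoly.coeff (Fintype.card n - 2) = A.charpoly.roots.esymm 2 := by
    rw [coeff_eq_esymm_roots_of_splits (IsAlgClosed.splits _) (by simp),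
      A.charpoly_monic.leadingCoeff, charpoly_natDegree_eq_dim, Nat.sub_sub_self hn]
    simp
  have hcoeff := A.two_mul_charpoly_coeff_card_sub_two hn
  rw [hesymm, trace_eq_sum_roots_charpoly,
    Multiset.sq_sum_eq_sum_map_sq_add_two_mul_esymm_two] at hcoeff
  linear_combination hcoeff

theorem energy_nonneg {V : Type*} [Fintype V] [DecidableEq V] (M : Matrix V V ℝ) :
    0 ≤ energy M :=
  Multiset.sum_nonneg fun x hx => by
    obtain ⟨z, -, rfl⟩ := Multiset.mem_map.mp hx
    exact norm_nonneg z

theorem two_mul_sum_sq_le_energy_sq {V : Type*} [Fintype V] [DecidableEq V]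
    (M : Matrix V V ℝ) (hM : Mᵀ = -M) (hV : 2 ≤ Fintype.card V) :
    2 * ∑ i, ∑ j, M i j ^ 2 ≤ energy M ^ 2 := by
  set Mc : Matrix V V ℂ := M.map (fun x : ℝ => (x : ℂ))
  have hskew (i j : V) : M j i = -M i j := congrFun (congrFun hM i) j
  have hroots_sum : Mc.charpoly.roots.sum = 0 := by
    rw [← trace_eq_sum_roots_charpoly]
    refine Finset.sum_eq_zero fun i _ => ?_
    simp [Mc, show M i i = 0 by linarith [hskew i i]]
  have hroots_sq : (Mc.charpoly.roots.map (· ^ 2)).sum = -((∑ i, ∑ j, M i j ^ 2 : ℝ) : ℂ) := by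
    rw [← Mc.trace_sq_eq_sum_sq_roots_charpoly hV]
    simp only [Mc, trace, diag, sq, mul_apply, map_apply, Complex.ofReal_sum,
      ← Finset.sum_neg_distrib]
    refine Finset.sum_congr rfl fun i _ => Finset.sum_congr rfl fun j _ => ?_
    rw [hskew]
    push_cast
    ring
  have := Multiset.two_mul_norm_sum_map_sq_le _ hroots_sum
  rwa [hroots_sq, norm_neg, Complex.norm_real, Real.norm_of_nonneg (by positivity)] at this

theorem SimpleGraph.sum_inv_degree_neighbor_eq_card {V : Type*} [Fintype V]
    (G : SimpleGraph V) [DecidableRel G.Adj] (hdeg : ∀ v, 0 < G.degree v) :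
    ∑ v, ∑ w ∈ G.neighborFinset v, (1 / G.degree w : ℝ) = Fintype.card V := by
  rw [Finset.sum_comm' (t' := Finset.univ) (s' := fun w => G.neighborFinset w)
    (by simp [adj_comm])]
  simp [(hdeg _).ne']

theorem SimpleGraph.two_mul_card_sub_two_mul_card_edgeFinset_le {V : Type*} [Fintype V]
    (G : SimpleGraph V) [DecidableRel G.Adj] (hdeg : ∀ v, 0 < G.degree v) :
    2 * (Fintype.card V : ℝ) - 2 * G.edgeFinset.card ≤
      ∑ v, ∑ w ∈ G.neighborFinset v, 1 / ((G.degree v : ℝ) * G.degree w) := by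
  have hinv (v : V) : 1 / (G.degree v : ℝ) ≤ 1 :=
    div_le_one_of_le₀ (mod_cast hdeg v) (Nat.cast_nonneg _)
  have hterm (v w : V) :
      1 / (G.degree v : ℝ) + 1 / G.degree w - 1 ≤ 1 / ((G.degree v : ℝ) * G.degree w) := by
    rw [← one_div_mul_one_div]
    nlinarith [mul_nonneg (sub_nonneg.mpr (hinv v)) (sub_nonneg.mpr (hinv w))]
  calc 2 * (Fintype.card V : ℝ) - 2 * G.edgeFinset.card
      = ∑ v, ∑ w ∈ G.neighborFinset v, (1 / (G.degree v : ℝ) + 1 / G.degree w - 1) := by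
        simp only [Finset.sum_sub_distrib, Finset.sum_add_distrib,
          G.sum_inv_degree_neighbor_eq_card hdeg]
        simp [(hdeg _).ne', ← Nat.cast_sum, G.sum_degrees_eq_twice_card_edges]
        ring
    _ ≤ _ := Finset.sum_le_sum fun v _ => Finset.sum_le_sum fun w _ => hterm v w

theorem SimpleGraph.IsTree.two_le_sum_inv_degree_mul {V : Type*} [Fintype V]
    {G : SimpleGraph V} [DecidableRel G.Adj] (hG : G.IsTree) (hV : 2 ≤ Fintype.card V) :
    2 ≤ ∑ v, ∑ w ∈ G.neighborFinset v, 1 / ((G.degree v : ℝ) * G.degree w) := by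
  have : Nontrivial V := Fintype.one_lt_card_iff_nontrivial.mp hV
  have hcard : (Fintype.card V : ℝ) = G.edgeFinset.card + 1 := by
    exact_mod_cast hG.card_edgeFinset.symm
  have := G.two_mul_card_sub_two_mul_card_edgeFinset_le
    fun v => hG.connected.preconnected.degree_pos_of_nontrivial v
  linarith

theorem IsOrientation.transpose_skewRandicMatrix {V : Type*} [Fintype V]
    {G : SimpleGraph V} [DecidableRel G.Adj] {σ : V → V → ℝ} (hσ : IsOrientation G σ) :
    (skewRandicMatrix G σ)ᵀ = -skewRandicMatrix G σ := by
  ext v w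
  simp [skewRandicMatrix, eq_neg_of_add_eq_zero_left (hσ.1 w v), mul_comm, neg_div]

theorem IsOrientation.sum_sq_skewRandicMatrix {V : Type*} [Fintype V]
    {G : SimpleGraph V} [DecidableRel G.Adj] {σ : V → V → ℝ} (hσ : IsOrientation G σ) :
    ∑ v, ∑ w, skewRandicMatrix G σ v w ^ 2 =
      ∑ v, ∑ w ∈ G.neighborFinset v, 1 / ((G.degree v : ℝ) * G.degree w) := by
  refine Finset.sum_congr rfl fun v _ => ?_
  rw [G.neighborFinset_eq_filter, Finset.sum_filter]
  refine Finset.sum_congr rfl fun w _ => ?_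
  split_ifs with hvw
  · have hσ_sq : σ v w ^ 2 = 1 := by rcases hσ.2.1 v w hvw with h | h <;> simp [h]
    rw [skewRandicMatrix, div_pow, hσ_sq, Real.sq_sqrt (by positivity)]
  · simp [skewRandicMatrix, hσ.2.2 v w hvw]

theorem skewRandic_energy_tree_lower_bound
    {V : Type*} [Fintype V] [DecidableEq V] (T : SimpleGraph V) [DecidableRel T.Adj]
    (hconn : T.Connected) (hacyc : T.IsAcyclic) (hn : 2 ≤ Fintype.card V)
    (σ : V → V → ℝ) (hσ : IsOrientation T σ) :
    2 ≤ energy (skewRandicMatrix T σ) := by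
  have henergy := two_mul_sum_sq_le_energy_sq _ hσ.transpose_skewRandicMatrix hn
  rw [hσ.sum_sq_skewRandicMatrix] at henergy
  have htree := SimpleGraph.IsTree.two_le_sum_inv_degree_mul ⟨hconn, hacyc⟩ hn
  nlinarith [energy_nonneg (skewRandicMatrix T σ)]
end

section
/- Let G be a simple graph on a finite vertex set V, let σ be an orientation of G, and let ε : V → ℝ be a function with ε(v) ∈ {1, −1} for all v. Define τ by τ v w = ε(v)·σ v w·ε(w) (so G^τ is obtained from G^σ by a switching with respect to the set W = {v : ε(v) = −1}). Then τ is an orientation of G and the skew Randić spectrum of G^τ equals the skew Randić spectrum of G^σ (as multisets). -/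
open Matrix Polynomial

theorem IsOrientation.switch {V : Type*} [Fintype V] {G : SimpleGraph V} [DecidableRel G.Adj]
    {σ : V → V → ℝ} (hσ : IsOrientation G σ) {ε : V → ℝ} (hε : ∀ v, ε v = 1 ∨ ε v = -1) :
    IsOrientation G (fun v w => ε v * σ v w * ε w) := by
  obtain ⟨hanti, hadj, hnonadj⟩ := hσ
  refine ⟨fun v w => ?_, fun v w hvw => ?_, fun v w hvw => by simp [hnonadj v w hvw]⟩
  · linear_combination ε v * ε w * hanti v w
  · rw [← mul_self_eq_one_iff]
    calc ε v * σ v w * ε w * (ε v * σ v w * ε w)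
        = (ε v * ε v) * (σ v w * σ v w) * (ε w * ε w) := by ring
      _ = 1 := by
        rw [mul_self_eq_one_iff.mpr (hε v), mul_self_eq_one_iff.mpr (hadj v w hvw),
          mul_self_eq_one_iff.mpr (hε w), one_mul, one_mul]

theorem skewRandicMatrix_switch {V : Type*} [Fintype V] [DecidableEq V] (G : SimpleGraph V)
    [DecidableRel G.Adj] (σ : V → V → ℝ) (ε : V → ℝ) :
    skewRandicMatrix G (fun v w => ε v * σ v w * ε w)
      = diagonal ε * skewRandicMatrix G σ * diagonal ε := by
  ext v w
  rw [mul_diagonal, diagonal_mul, skewRandicMatrix, skewRandicMatrix]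
  ring

theorem spec_mul_comm {V : Type*} [Fintype V] [DecidableEq V] (A B : Matrix V V ℝ) :
    spec (A * B) = spec (B * A) := by
  have hmap (M N : Matrix V V ℝ) :
      (M * N).map (fun x : ℝ => (x : ℂ))
        = M.map (fun x : ℝ => (x : ℂ)) * N.map (fun x : ℝ => (x : ℂ)) :=
    Matrix.map_mul (f := Complex.ofRealHom)
  rw [spec, spec, hmap, hmap, charpoly_mul_comm]

theorem skewRandic_spectrum_switching_invariant
    {V : Type*} [Fintype V] [DecidableEq V] (G : SimpleGraph V) [DecidableRel G.Adj]
    (σ : V → V → ℝ) (hσ : IsOrientation G σ)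
    (ε : V → ℝ) (hε : ∀ v, ε v = 1 ∨ ε v = -1) :
    IsOrientation G (fun v w => ε v * σ v w * ε w) ∧
    spec (skewRandicMatrix G (fun v w => ε v * σ v w * ε w))
      = spec (skewRandicMatrix G σ) := by
  refine ⟨hσ.switch hε, ?_⟩
  have hεε : diagonal ε * diagonal ε = 1 := by
    rw [diagonal_mul_diagonal, ← diagonal_one]
    exact congrArg diagonal (funext fun v => mul_self_eq_one_iff.mpr (hε v))
  rw [skewRandicMatrix_switch, spec_mul_comm, ← mul_assoc, hεε, one_mul]
end
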